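/- Let V satisfy the Bellman equation V = TV where T(W) = R + γ P W with 0 ≤ γ < 1, let Π be a linear projection with Π V_θ = V_θ for V_θ = Φθ, and suppose the matrix I - γ Π P is invertible. Then the componentwise identity holds: V - V_θ = (I - γ Π P)^{-1} ((V - Π V) + Φ (ΦᵀΞΦ)^{-1} K(θ)), where K(θ) = ΦᵀΞ(T V_θ - V_θ) and Π = Φ(ΦᵀΞΦ)^{-1}ΦᵀΞ. -/

import Mathlib

open Matrix

/-!
Since `Π` fixes the column span of `Φ`, it fixes `V_θ`, and `Φ (ΦᵀΞΦ)⁻¹ K(θ) = Π (T V_θ - V_θ)`.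
Substituting `R = V - γ P V` from the Bellman equation, the right-hand side inside the inverse
becomes `V - γ Π P V - V_θ + γ Π P V_θ = (I - γ Π P)(V - V_θ)`.
-/

section WeightedProjection

variable {m n 𝕜 : Type*} [Fintype m] [Fintype n] [DecidableEq n] [CommRing 𝕜]

noncomputable def weightedProjection (Ξ : Matrix m m 𝕜) (Φ : Matrix m n 𝕜) : Matrix m m 𝕜 :=
  Φ * (Φᵀ * Ξ * Φ)⁻¹ * Φᵀ * Ξ

theorem weightedProjection_mul_self {Ξ : Matrix m m 𝕜} {Φ : Matrix m n 𝕜}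
    (hM : IsUnit (Φᵀ * Ξ * Φ)) : weightedProjection Ξ Φ * Φ = Φ := by
  have hMinv : (Φᵀ * Ξ * Φ)⁻¹ * (Φᵀ * Ξ * Φ) = 1 :=
    nonsing_inv_mul _ ((isUnit_iff_isUnit_det _).mp hM)
  simp only [weightedProjection, Matrix.mul_assoc] at hMinv ⊢
  rw [hMinv, Matrix.mul_one]

theorem weightedProjection_mulVec_mulVec {Ξ : Matrix m m 𝕜} {Φ : Matrix m n 𝕜}
    (hM : IsUnit (Φᵀ * Ξ * Φ)) (θ : n → 𝕜) :
    weightedProjection Ξ Φ *ᵥ (Φ *ᵥ θ) = Φ *ᵥ θ := by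
  rw [mulVec_mulVec, weightedProjection_mul_self hM]

theorem mulVec_inv_gram_mulVec (Ξ : Matrix m m 𝕜) (Φ : Matrix m n 𝕜) (w : m → 𝕜) :
    Φ *ᵥ ((Φᵀ * Ξ * Φ)⁻¹ *ᵥ ((Φᵀ * Ξ) *ᵥ w)) = weightedProjection Ξ Φ *ᵥ w := by
  simp only [weightedProjection, mulVec_mulVec, Matrix.mul_assoc]

end WeightedProjection

section BellmanError

variable {m 𝕜 : Type*} [Fintype m] [DecidableEq m] [CommRing 𝕜]

theorem one_sub_smul_mul_mulVec_sub_of_fixedPoint {Pr P : Matrix m m 𝕜} {R V W : m → 𝕜} {γ : 𝕜}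
    (hV : V = R + γ • P *ᵥ V) (hW : Pr *ᵥ W = W) :
    (1 - γ • (Pr * P)) *ᵥ (V - W) = (V - Pr *ᵥ V) + Pr *ᵥ (R + γ • P *ᵥ W - W) := by
  have hR : Pr *ᵥ R = Pr *ᵥ V - γ • Pr *ᵥ (P *ᵥ V) := by
    rw [← mulVec_smul, ← mulVec_sub]
    exact congrArg (Pr *ᵥ ·) (eq_sub_of_add_eq hV.symm)
  simp only [sub_mulVec, one_mulVec, smul_mulVec, ← mulVec_mulVec, mulVec_sub, mulVec_add,
    mulVec_smul, hR, hW]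
  abel

theorem inv_mulVec_eq_of_mulVec_eq {A : Matrix m m 𝕜} (hA : IsUnit A) {u v : m → 𝕜}
    (h : A *ᵥ v = u) : A⁻¹ *ᵥ u = v := by
  let _ := hA.invertible
  exact inv_mulVec_eq_vec h.symm

end BellmanError

theorem bellman_error_decomposition_general {nS d : ℕ}
    (Ξ : Matrix (Fin nS) (Fin nS) ℝ)
    (Φ : Matrix (Fin nS) (Fin d) ℝ)
    (hM : IsUnit (Φᵀ * Ξ * Φ))
    (P : Matrix (Fin nS) (Fin nS) ℝ) (R : Fin nS → ℝ)
    (γ : ℝ)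
    (T : (Fin nS → ℝ) → (Fin nS → ℝ))
    (hT : ∀ W, T W = R + γ • P.mulVec W)
    (Pim : Matrix (Fin nS) (Fin nS) ℝ)
    (hPim : Pim = Φ * (Φᵀ * Ξ * Φ)⁻¹ * Φᵀ * Ξ)
    (hinv : IsUnit ((1 : Matrix (Fin nS) (Fin nS) ℝ) - γ • (Pim * P)))
    (V : Fin nS → ℝ) (hV : V = T V)
    (θ : Fin d → ℝ) (Vθ : Fin nS → ℝ) (hVθ : Vθ = Φ.mulVec θ)
    (K : (Fin d → ℝ) → (Fin d → ℝ))
    (hK : ∀ θ', K θ' = (Φᵀ * Ξ).mulVec (T (Φ.mulVec θ') - Φ.mulVec θ')) :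
    V - Vθ =
      ((1 : Matrix (Fin nS) (Fin nS) ℝ) - γ • (Pim * P))⁻¹.mulVec
        ((V - Pim.mulVec V) + Φ.mulVec ((Φᵀ * Ξ * Φ)⁻¹.mulVec (K θ))) := by
  have hPr : Pim = weightedProjection Ξ Φ := hPim
  subst hVθ
  refine (inv_mulVec_eq_of_mulVec_eq hinv ?_).symm
  rw [hK, mulVec_inv_gram_mulVec, ← hPr, hT]
  exact one_sub_smul_mul_mulVec_sub_of_fixedPoint (hV.trans (hT V))
    (hPr ▸ weightedProjection_mulVec_mulVec hM θ)

/-- Bellman error decomposition: if `V = TV` with `T(W) = R + γ P W`, `Π` is the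
`Ξ`-weighted least-squares projection `Π = Φ(ΦᵀΞΦ)⁻¹ΦᵀΞ` (so `Π V_θ = V_θ` for
`V_θ = Φθ`), and `I - γΠP` is invertible, then
`V - V_θ = (I - γΠP)⁻¹ ((V - ΠV) + Φ(ΦᵀΞΦ)⁻¹ K(θ))` where
`K(θ) = ΦᵀΞ(TV_θ - V_θ)`. -/
theorem bellman_error_decomposition {nS d : ℕ}
    (Ξ : Matrix (Fin nS) (Fin nS) ℝ) (hdiag : Ξ.IsDiag) (hpos : Ξ.PosDef)
    (Φ : Matrix (Fin nS) (Fin d) ℝ)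
    (hM : IsUnit (Φᵀ * Ξ * Φ))
    (P : Matrix (Fin nS) (Fin nS) ℝ) (R : Fin nS → ℝ)
    (γ : ℝ) (hγ0 : 0 ≤ γ) (hγ1 : γ < 1)
    (T : (Fin nS → ℝ) → (Fin nS → ℝ))
    (hT : ∀ W, T W = R + γ • P.mulVec W)
    (Pim : Matrix (Fin nS) (Fin nS) ℝ)
    (hPim : Pim = Φ * (Φᵀ * Ξ * Φ)⁻¹ * Φᵀ * Ξ)
    (hinv : IsUnit ((1 : Matrix (Fin nS) (Fin nS) ℝ) - γ • (Pim * P)))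
    (V : Fin nS → ℝ) (hV : V = T V)
    (θ : Fin d → ℝ) (Vθ : Fin nS → ℝ) (hVθ : Vθ = Φ.mulVec θ)
    (K : (Fin d → ℝ) → (Fin d → ℝ))
    (hK : ∀ θ', K θ' = (Φᵀ * Ξ).mulVec (T (Φ.mulVec θ') - Φ.mulVec θ')) :
    V - Vθ =
      ((1 : Matrix (Fin nS) (Fin nS) ℝ) - γ • (Pim * P))⁻¹.mulVec
        ((V - Pim.mulVec V) + Φ.mulVec ((Φᵀ * Ξ * Φ)⁻¹.mulVec (K θ))) :=
  bellman_error_decomposition_general Ξ Φ hM P R γ T hT Pim hPim hinv V hV θ Vθ hVθ K hK
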